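/- arXiv:2403.04043 — 3 statements merged into one kernel-verified Lean document; each statement's English description precedes it below -/
import Mathlib

section
/- Under the same hypotheses, for every x ∈ F_T with coding sequence y, Dim(x) = sdim(F_T) · Dim^{μ_ℓ}(y), where Dim denotes limsup in place of liminf in the definitions of effective dimension. -/
/-- A set of strings is prefix-free. -/
def PrefixFreeSet {α : Type*} (D : Set (List α)) : Prop :=
  ∀ p ∈ D, ∀ q ∈ D, p <+: q → p = q

/-- The Kolmogorov complexity of σ relative to a (partial) machine U. -/
noncomputable def Kof {β : Type*} (U : List Bool →. List β) (σ : List β) : ℕ :=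
  sInf {n : ℕ | ∃ p : List Bool, p.length = n ∧ σ ∈ U p}

/-- U is a universal prefix-free machine: it is partial computable, its domain is
prefix-free, every string is in its range, and it is optimal among all prefix-free
machines up to an additive constant. -/
def IsUniversalPF {β : Type*} [Primcodable β] (U : List Bool →. List β) : Prop :=
  Partrec U ∧ PrefixFreeSet {p | (U p).Dom} ∧ (∀ σ, ∃ p, σ ∈ U p) ∧
    ∀ M : List Bool →. List β, Partrec M → PrefixFreeSet {p | (M p).Dom} →
      ∃ d : ℕ, ∀ σ, (∃ p, σ ∈ M p) → Kof U σ ≤ Kof M σ + d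


/-- The substring x↾[a,b) of an infinite sequence x. -/
def seg {m : ℕ} (x : ℕ → Fin m) (a b : ℕ) : List (Fin m) :=
  List.ofFn (fun i : Fin (b - a) => x (a + i))

open Filter

/-!
The coding map `w ↦ τ (w 0) ++ τ (w 1) ++ ⋯` is computable and, since the `τ i` form a prefix
code, computably invertible; hence `K(x↾n_j)` and `K(y↾j)` agree up to an additive constant.
Blocks have bounded length, so every prefix `x↾N` is obtained from some `x↾n_j` with
`N ≤ n_j ≤ N + L` by deleting at most `L` symbols, which costs `O(1)` bits as well. Finally
`-log₂ μ_ℓ(y↾j) = β · n_j · log₂ m`, so the two normalised limsups differ by exactly the factor `β`.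
-/

theorem PrefixFreeSet.mono {γ : Type*} {D D' : Set (List γ)} (h : PrefixFreeSet D)
    (hsub : D' ⊆ D) : PrefixFreeSet D' :=
  fun p hp q hq => h p (hsub hp) q (hsub hq)

section Kolmogorov

variable {α β : Type*}

theorem Kof_le_length {U : List Bool →. List α} {σ : List α} {p : List Bool} (h : σ ∈ U p) :
    Kof U σ ≤ p.length :=
  Nat.sInf_le ⟨p, rfl, h⟩

theorem exists_length_eq_Kof {U : List Bool →. List α} {σ : List α} (h : ∃ p, σ ∈ U p) :
    ∃ p, σ ∈ U p ∧ p.length = Kof U σ := by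
  obtain ⟨p, hp⟩ := h
  obtain ⟨q, hq, hσq⟩ := Nat.sInf_mem (s := {n | ∃ p : List Bool, p.length = n ∧ σ ∈ U p})
    ⟨p.length, p, rfl, hp⟩
  exact ⟨q, hσq, hq⟩

variable [Primcodable α] [Primcodable β]

theorem exists_Kof_le_Kof_add_of_partrec {U : List Bool →. List α} {V : List Bool →. List β}
    (hU : IsUniversalPF U) (hV : IsUniversalPF V) {g : List α →. List β} (hg : Partrec g) :
    ∃ C, ∀ w, ∀ σ ∈ g w, Kof V σ ≤ Kof U w + C := by
  obtain ⟨hUrec, hUpf, hUsurj, -⟩ := hU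
  let M : List Bool →. List β := fun p => (U p).bind g
  have hMrec : Partrec M := hUrec.bind (hg.comp Computable.snd)
  have hMpf : PrefixFreeSet {p | (M p).Dom} := hUpf.mono fun _ hp => hp.fst
  obtain ⟨C, hC⟩ := hV.2.2.2 M hMrec hMpf
  refine ⟨C, fun w σ hσ => ?_⟩
  obtain ⟨p, hp, hlen⟩ := exists_length_eq_Kof (hUsurj w)
  have hσM : σ ∈ M p := Part.mem_bind hp hσ
  calc Kof V σ ≤ Kof M σ + C := hC σ ⟨p, hσM⟩
    _ ≤ Kof U w + C := by rw [← hlen]; exact Nat.add_le_add_right (Kof_le_length hσM) C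

theorem exists_partrec_leftInverse [DecidableEq β] {f : α → β} (hf : Primrec f)
    (hinj : Function.Injective f) : ∃ g : β →. α, Partrec g ∧ ∀ a, a ∈ g (f a) := by
  let F : β → ℕ → Option α := fun b i =>
    (Encodable.decode i).bind fun a => if f a = b then some a else none
  have hF : Computable₂ F := by
    refine Computable.option_bind (Computable.decode.comp Computable.snd) ?_
    exact (Primrec.ite (Primrec.eq.comp (hf.comp Primrec.snd) (Primrec.fst.comp Primrec.fst))
      (Primrec.option_some.comp Primrec.snd) (Primrec.const none)).to_comp
  refine ⟨fun b => Nat.rfindOpt (F b), Partrec.rfindOpt hF, fun a => ?_⟩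
  have huniq : ∀ i a', a' ∈ F (f a) i → a' = a := fun i a' h => by
    simp only [F, Option.mem_def, Option.bind_eq_some_iff, Option.ite_none_right_eq_some,
      Option.some_inj] at h
    obtain ⟨a'', -, hfa, rfl⟩ := h
    exact hinj hfa
  have hdom : (Nat.rfindOpt (F (f a))).Dom :=
    Nat.rfindOpt_dom.2 ⟨Encodable.encode a, a, by simp [F]⟩
  have hmem := Part.get_mem hdom
  obtain ⟨i, hi⟩ := Nat.rfindOpt_spec hmem
  rwa [huniq i _ hi] at hmem

-- For each fixed `d`, cutting off the last `d` symbols is computable; take the worst of `d ≤ L`.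
theorem exists_Kof_take_le {U : List Bool →. List α} (hU : IsUniversalPF U) (L : ℕ) :
    ∃ C, ∀ (σ : List α) (N : ℕ), σ.length ≤ N + L → Kof U (σ.take N) ≤ Kof U σ + C := by
  have hdrop : ∀ d, ∃ C, ∀ σ : List α, Kof U (σ.take (σ.length - d)) ≤ Kof U σ + C := fun d => by
    have htake : Computable fun σ : List α => σ.take (σ.length - d) :=
      (Primrec.list_take.comp (Primrec.nat_sub.comp Primrec.list_length (Primrec.const d))
        Primrec.id).to_comp
    obtain ⟨C, hC⟩ := exists_Kof_le_Kof_add_of_partrec hU hU htake.partrec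
    exact ⟨C, fun σ => hC σ _ (Part.mem_some _)⟩
  choose C hC using hdrop
  refine ⟨(Finset.range (L + 1)).sup C, fun σ N hN => ?_⟩
  rcases le_or_gt σ.length N with hle | hlt
  · rw [List.take_of_length_le hle]
    omega
  · have hCd := Finset.le_sup (f := C) (Finset.mem_range.2 (show σ.length - N < L + 1 by omega))
    have hσ := hC (σ.length - N) σ
    rw [Nat.sub_sub_self hlt.le] at hσ
    omega

end Kolmogorov

theorem flatMap_injective_of_pairwise_not_prefix {ι γ : Type*} {τ : ι → List γ}
    (hne : ∀ i, τ i ≠ []) (hτ : Pairwise fun i j => ¬ τ i <+: τ j) :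
    Function.Injective fun w : List ι => w.flatMap τ := by
  intro w₁
  induction w₁ with
  | nil =>
    rintro (_ | ⟨i, w₂⟩) h
    · rfl
    · exact absurd (List.append_eq_nil_iff.1 h.symm).1 (hne i)
  | cons i w₁ ih =>
    rintro (_ | ⟨j, w₂⟩) h
    · exact absurd (List.append_eq_nil_iff.1 h).1 (hne i)
    · simp only [List.flatMap_cons] at h
      have hij : i = j := by
        by_contra hij
        rcases List.prefix_or_prefix_of_prefix (List.prefix_append (τ i) _)
            (h ▸ List.prefix_append (τ j) _) with hp | hp
        exacts [hτ hij hp, hτ (Ne.symm hij) hp]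
      subst hij
      rw [ih (List.append_cancel_left h)]

theorem exists_Kof_flatMap_le_and_le {ι γ : Type*} [Primcodable ι] [Finite ι] [Primcodable γ]
    [DecidableEq γ] {Uι : List Bool →. List ι} {Uγ : List Bool →. List γ}
    (hUι : IsUniversalPF Uι) (hUγ : IsUniversalPF Uγ) {τ : ι → List γ} (hne : ∀ i, τ i ≠ [])
    (hτ : Pairwise fun i j => ¬ τ i <+: τ j) :
    ∃ C, ∀ w, Kof Uγ (w.flatMap τ) ≤ Kof Uι w + C ∧ Kof Uι w ≤ Kof Uγ (w.flatMap τ) + C := by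
  have hcode : Primrec fun w : List ι => w.flatMap τ :=
    Primrec.list_flatMap Primrec.id ((Primrec.dom_finite τ).comp Primrec.snd).to₂
  obtain ⟨C₁, hC₁⟩ := exists_Kof_le_Kof_add_of_partrec hUι hUγ hcode.to_comp.partrec
  obtain ⟨g, hg, hgf⟩ :=
    exists_partrec_leftInverse hcode (flatMap_injective_of_pairwise_not_prefix hne hτ)
  obtain ⟨C₂, hC₂⟩ := exists_Kof_le_Kof_add_of_partrec hUγ hUι hg
  refine ⟨C₁ + C₂, fun w => ⟨?_, ?_⟩⟩
  · have := hC₁ w (w.flatMap τ) (Part.mem_some _)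
    omega
  · have := hC₂ _ w (hgf w)
    omega

section seg

variable {m : ℕ} (x : ℕ → Fin m)

@[simp] theorem seg_length (a b : ℕ) : (seg x a b).length = b - a := by simp [seg]

@[simp] theorem seg_getElem {a b i : ℕ} (h : i < (seg x a b).length) :
    (seg x a b)[i] = x (a + i) := by
  simp [seg]

theorem seg_append {a b c : ℕ} (hab : a ≤ b) (hbc : b ≤ c) :
    seg x a b ++ seg x b c = seg x a c := by
  refine List.ext_getElem (by simp; omega) fun i h₁ h₂ => ?_
  rw [List.getElem_append]
  split_ifs with hi
  · simp
  · simp only [seg_length, seg_getElem] at hi ⊢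
    congr 1
    omega

theorem seg_zero_succ (a : ℕ) : seg x 0 (a + 1) = seg x 0 a ++ [x a] := by
  simp only [seg, Nat.sub_zero, Nat.zero_add]
  rw [List.ofFn_succ', List.concat_eq_append]
  rfl

theorem take_seg_zero {b c : ℕ} (h : c ≤ b) : (seg x 0 b).take c = seg x 0 c :=
  List.ext_getElem (by simp; omega) fun i _ _ => by simp

end seg

theorem flatMap_seg_eq_seg {m k : ℕ} {τ : Fin k → List (Fin m)} {x : ℕ → Fin m}
    {y : ℕ → Fin k} {n : ℕ → ℕ} (hn0 : n 0 = 0) (hn : Monotone n)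
    (hblock : ∀ j, seg x (n j) (n (j + 1)) = τ (y j)) (j : ℕ) :
    (seg y 0 j).flatMap τ = seg x 0 (n j) := by
  induction j with
  | zero => simp [hn0, seg]
  | succ j ih =>
    rw [seg_zero_succ, List.flatMap_append, ih, List.flatMap_singleton, ← hblock,
      seg_append _ (Nat.zero_le _) (hn j.le_succ)]

section limsup

theorem csInf_le_csInf_of_forall_add_mem {S T : Set ℝ} (hS : BddBelow S) (hT : T.Nonempty)
    (h : ∀ a ∈ T, ∀ ε > 0, a + ε ∈ S) : sInf S ≤ sInf T := by
  refine le_of_forall_pos_le_add fun ε hε => ?_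
  obtain ⟨a, haT, ha⟩ := Real.lt_sInf_add_pos hT (half_pos hε)
  calc sInf S ≤ a + ε / 2 := csInf_le hS (h a haT _ (half_pos hε))
    _ ≤ sInf T + ε := by linarith

variable {ι κ : Type*}

theorem bddBelow_setOf_eventually_le {l : Filter ι} [l.NeBot] {w : ι → ℝ} (hw : 0 ≤ w) :
    BddBelow {A | ∀ᶠ i in l, w i ≤ A} :=
  ⟨0, fun _ hA => let ⟨i, hi⟩ := hA.exists; (hw i).trans hi⟩

theorem limsup_eq_limsup_of_forall_eventually_le_add {f : Filter ι} {g : Filter κ} [f.NeBot]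
    [g.NeBot] {u : ι → ℝ} {v : κ → ℝ} (hu : 0 ≤ u) (hv : 0 ≤ v)
    (huv : ∀ A, (∀ᶠ i in f, u i ≤ A) → ∀ ε > 0, ∀ᶠ j in g, v j ≤ A + ε)
    (hvu : ∀ A, (∀ᶠ j in g, v j ≤ A) → ∀ ε > 0, ∀ᶠ i in f, u i ≤ A + ε) :
    limsup u f = limsup v g := by
  rw [limsup_eq, limsup_eq]
  rcases Set.eq_empty_or_nonempty {A | ∀ᶠ i in f, u i ≤ A} with hS | hS
  · have hT : {A | ∀ᶠ j in g, v j ≤ A} = ∅ :=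
      Set.eq_empty_of_forall_notMem fun A hA => hS.subset (hvu A hA 1 one_pos)
    rw [hS, hT]
  · have hT : {A | ∀ᶠ j in g, v j ≤ A}.Nonempty :=
      let ⟨A, hA⟩ := hS
      ⟨A + 1, huv A hA 1 one_pos⟩
    exact le_antisymm (csInf_le_csInf_of_forall_add_mem (bddBelow_setOf_eventually_le hu) hT hvu)
      (csInf_le_csInf_of_forall_add_mem (bddBelow_setOf_eventually_le hv) hS huv)

open scoped Pointwise in
theorem Real.limsup_const_mul_of_pos {f : Filter ι} {u : ι → ℝ} {c : ℝ} (hc : 0 < c) :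
    limsup (fun i => c * u i) f = c * limsup u f := by
  rw [limsup_eq, limsup_eq, ← smul_eq_mul, ← Real.sInf_smul_of_nonneg hc.le]
  congr 1
  ext A
  simp only [Set.mem_smul_set_iff_inv_smul_mem₀ hc.ne', Set.mem_ofPred_eq, smul_eq_mul,
    le_inv_mul_iff₀ hc]

theorem eventually_div_le_add_of_eventually_le_mul_add {l : Filter ι} {f g : ι → ℝ} {A D : ℝ}
    (hg : Tendsto g l atTop) (h : ∀ᶠ i in l, f i ≤ A * g i + D) {ε : ℝ} (hε : 0 < ε) :
    ∀ᶠ i in l, f i / g i ≤ A + ε := by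
  filter_upwards [h, hg.eventually_gt_atTop 0, hg.eventually_ge_atTop (D / ε)]
    with i hi hg_pos hgD
  rw [div_le_iff₀ hg_pos]
  have : D ≤ ε * g i := (div_le_iff₀' hε).1 hgD
  linarith

end limsup

theorem exists_le_le_add_of_gap_le {n : ℕ → ℕ} {L : ℕ} (hn0 : n 0 = 0) (hn : StrictMono n)
    (hgap : ∀ j, n (j + 1) ≤ n j + L) (N : ℕ) : ∃ j, N ≤ n j ∧ n j ≤ N + L := by
  classical
  have hex : ∃ j, N ≤ n j := ⟨N, hn.id_le N⟩
  refine ⟨Nat.find hex, Nat.find_spec hex, ?_⟩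
  rcases h : Nat.find hex with _ | j
  · omega
  · have hj := Nat.find_min hex (show j < Nat.find hex by omega)
    have := hgap j
    omega

theorem limsup_div_eq_limsup_div_of_gap_le {a b n : ℕ → ℕ} {C L : ℕ} {c : ℝ} (hc : 0 < c)
    (hn : StrictMono n) (hcover : ∀ N, ∃ j, N ≤ n j ∧ n j ≤ N + L)
    (hba : ∀ j, b j ≤ a (n j) + C) (hab : ∀ j, a (n j) ≤ b j + C)
    (ha : ∀ N N', N ≤ N' → N' ≤ N + L → a N ≤ a N' + C) :
    limsup (fun N => (a N : ℝ) / (N * c)) atTop = limsup (fun j => (b j : ℝ) / (n j * c)) atTop := by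
  have hNc : Tendsto (fun N : ℕ => (N : ℝ) * c) atTop atTop :=
    tendsto_natCast_atTop_atTop.atTop_mul_const hc
  have hnc : Tendsto (fun j => (n j : ℝ) * c) atTop atTop := hNc.comp hn.tendsto_atTop
  refine limsup_eq_limsup_of_forall_eventually_le_add (fun N => by positivity)
    (fun j => by positivity) (fun A hA ε hε => ?_) (fun A hA ε hε => ?_)
  · refine eventually_div_le_add_of_eventually_le_mul_add (D := C) hnc ?_ hε
    filter_upwards [hn.tendsto_atTop.eventually hA, hnc.eventually_gt_atTop 0] with j hj hpos
    have hanj := (div_le_iff₀ hpos).1 hj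
    have : (b j : ℝ) ≤ a (n j) + C := by exact_mod_cast hba j
    linarith
  · obtain ⟨J, hJ⟩ := eventually_atTop.1 hA
    have hA0 : 0 ≤ A := (by positivity : (0 : ℝ) ≤ b J / (n J * c)).trans (hJ J le_rfl)
    refine eventually_div_le_add_of_eventually_le_mul_add (D := A * (L * c) + 2 * C) hNc ?_ hε
    filter_upwards [eventually_gt_atTop (n J)] with N hN
    obtain ⟨j, hNj, hjN⟩ := hcover N
    have hJj : J ≤ j := (hn.lt_iff_lt.1 (hN.trans_le hNj)).le
    have hbj : (b j : ℝ) ≤ A * (n j * c) :=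
      (div_le_iff₀ (by have : 0 < n j := by omega
                       positivity)).1 (hJ j hJj)
    have haN : (a N : ℝ) ≤ b j + 2 * C := by
      have := hab j
      exact_mod_cast (ha N (n j) hNj hjN).trans (by omega)
    have hnj : A * (n j * c) ≤ A * ((N + L) * c) := by gcongr; exact_mod_cast hjN
    linarith

theorem pos_of_sum_rpow_neg_mul_eq_one {ι : Type*} [Fintype ι] (hι : 1 < Fintype.card ι)
    {m β : ℝ} (hm : 1 ≤ m) {ℓ : ι → ℝ} (hℓ : ∀ i, 0 ≤ ℓ i) (h : ∑ i, m ^ (-(β * ℓ i)) = 1) : 0 < β := by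
  by_contra! hβ
  have hterm : ∀ i, 1 ≤ m ^ (-(β * ℓ i)) := fun i =>
    Real.one_le_rpow hm (by nlinarith [hℓ i])
  have : (Fintype.card ι : ℝ) ≤ 1 :=
    calc (Fintype.card ι : ℝ) = ∑ _i : ι, (1 : ℝ) := by simp
      _ ≤ ∑ i, m ^ (-(β * ℓ i)) := Finset.sum_le_sum fun i _ => hterm i
      _ = 1 := h
  exact absurd hι (by exact_mod_cast this.not_gt)

theorem neg_logb_rpow_neg_pow {m : ℝ} (hm : 0 < m) (β : ℝ) (s : ℕ) :
    -Real.logb 2 ((m ^ (-β)) ^ s) = β * (s * Real.logb 2 m) := by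
  rw [Real.logb_pow, Real.logb_rpow_eq_mul_logb_of_pos hm]
  ring

open Filter in
/-- `τ` lists the terminal nodes of `T`, `β = sdim(F_T)`, `n` is the `T`-sequence and `y` the
coding sequence of `x`; the right-hand limsup is `Dim^{μ_ℓ}(y)` with `μ_ℓ(i) = (m^{-β})^{|τ i|}`. -/
theorem Dim_eq_sdim_mul_Dim_mu {m k : ℕ} (hm : 2 ≤ m) (hk : 2 ≤ k)
    (Um : List Bool →. List (Fin m)) (hUm : IsUniversalPF Um)
    (Uk : List Bool →. List (Fin k)) (hUk : IsUniversalPF Uk)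
    (τ : Fin k → List (Fin m))
    (hτlen : ∀ i, 1 ≤ (τ i).length)
    (hτpf : ∀ i j : Fin k, i ≠ j → ¬ τ i <+: τ j)
    (β : ℝ) (hβ : ∑ i : Fin k, (m : ℝ) ^ (-(β * ((τ i).length : ℝ))) = 1)
    (x : ℕ → Fin m) (y : ℕ → Fin k) (n : ℕ → ℕ)
    (hn0 : n 0 = 0) (hns : ∀ j, n (j + 1) = n j + (τ (y j)).length)
    (hblock : ∀ j, seg x (n j) (n (j + 1)) = τ (y j)) :
    limsup (fun N : ℕ => (Kof Um (seg x 0 N) : ℝ) / (N * Real.logb 2 m)) atTop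
      = β * limsup (fun j : ℕ => (Kof Uk (seg y 0 j) : ℝ) /
          (-Real.logb 2 (((m : ℝ) ^ (-β)) ^ (∑ e ∈ Finset.range j, (τ (y e)).length))))
          atTop := by
  have hlg : 0 < Real.logb 2 m := Real.logb_pos one_lt_two (by exact_mod_cast hm)
  have hβ0 : 0 < β := pos_of_sum_rpow_neg_mul_eq_one (by rw [Fintype.card_fin]; omega)
    (by exact_mod_cast (by omega : 1 ≤ m)) (fun i => Nat.cast_nonneg _) hβ
  have hn : StrictMono n := strictMono_nat_of_lt_succ fun j => by
    rw [hns]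
    exact Nat.lt_add_of_pos_right (hτlen (y j))
  set L := Finset.univ.sup fun i => (τ i).length
  have hgap : ∀ j, n (j + 1) ≤ n j + L := fun j => (hns j).le.trans
    (Nat.add_le_add_left (Finset.le_sup (f := fun i => (τ i).length) (Finset.mem_univ _)) _)
  have hcode := flatMap_seg_eq_seg hn0 hn.monotone hblock
  obtain ⟨C₁, hC₁⟩ := exists_Kof_flatMap_le_and_le hUk hUm
    (fun i => List.ne_nil_of_length_pos (hτlen i)) hτpf
  obtain ⟨C₃, hC₃⟩ := exists_Kof_take_le hUm L
  rw [limsup_div_eq_limsup_div_of_gap_le (a := fun N => Kof Um (seg x 0 N))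
    (b := fun j => Kof Uk (seg y 0 j)) (C := C₁ + C₃) hlg hn
    (exists_le_le_add_of_gap_le hn0 hn hgap), ← Real.limsup_const_mul_of_pos hβ0]
  · congr 1
    funext j
    rw [← Finset.sum_range_induction _ n hn0 j fun i _ => hns i,
      neg_logb_rpow_neg_pow (by positivity), ← mul_div_assoc, mul_div_mul_left _ _ hβ0.ne']
  · intro j
    have := (hC₁ (seg y 0 j)).2
    rw [hcode] at this
    omega
  · intro j
    have := (hC₁ (seg y 0 j)).1
    rw [hcode] at this
    omega
  · intro N N' hNN' hN'
    have := hC₃ (seg x 0 N') N (by simpa using hN')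
    rw [take_seg_zero x hNN'] at this
    omega
end

section
/- Let T be a finite tree with n non-terminal nodes and let A be the n×n adjacency matrix of the associated pointed directed graph G (vertices = non-terminal nodes of T; for each child relation an edge; each terminal node of T of depth d contributes to a path of length d from v_1 back to v_1). If p_A(z) = z^n + c_1 z^{n−1} + ⋯ + c_{n−1} z + c_n is the characteristic polynomial of A, then for each i = 1,...,n, −c_i equals the number of terminal nodes of T of depth i. -/
/-!
Write `A = B + w eᵣᵀ`, where `B` is the adjacency matrix of the tree itself (an edge from each
node to each of its children), `r` is the root and `w u` is the number of terminal children of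
`u`. Since `B` strictly increases depth, it is nilpotent, so `det (X - B) = Xⁿ` and
`adj (X - B) = ∑ᵢ Xⁱ Bⁿ⁻¹⁻ⁱ`. Linearity of `det (X - A)` in the root column gives
`p_A = Xⁿ - (adj (X - B) w)ᵣ`, hence `-cᵢ = (Bⁱ⁻¹ w)ᵣ`. Finally `(Bᵏ)ᵣᵥ = 1` exactly when `v` has
depth `k`, so `(Bⁱ⁻¹ w)ᵣ` counts the terminal nodes of depth `i`.
-/

open scoped Classical

/-- A finite tree: downward closed under the prefix relation. -/
def DownClosed {m : ℕ} (T : Finset (List (Fin m))) : Prop :=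
  ∀ σ ∈ T, ∀ p : List (Fin m), p <+: σ → p ∈ T

/-- σ is a terminal node of T: a maximal element of T under the prefix relation. -/
def IsTerminal {m : ℕ} (T : Finset (List (Fin m))) (σ : List (Fin m)) : Prop :=
  σ ∈ T ∧ ∀ τ ∈ T, σ <+: τ → τ = σ

/-- The non-terminal nodes of T: the vertices of the associated pointed graph. -/
noncomputable def NonTerm {m : ℕ} (T : Finset (List (Fin m))) : Finset (List (Fin m)) :=
  T.filter (fun σ => ¬ IsTerminal T σ)

open Polynomial Matrix Finset

namespace Matrix

variable {ι R : Type*} [Fintype ι] [DecidableEq ι] [CommRing R]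

theorem charmatrix_mul_geom_sum (B : Matrix ι ι R) (n : ℕ) :
    charmatrix B * ∑ i ∈ range n, (X : R[X]) ^ i • (B ^ (n - 1 - i)).map C
      = (X : R[X]) ^ n • 1 - (B ^ n).map C := by
  have hcomm := scalar_commute (X : R[X]) (fun _ => Commute.all _ _) (B.map C)
  have hpow : ∀ k, (B ^ k).map C = B.map C ^ k := (RingHom.mapMatrix C).map_pow B
  have hscalar : ∀ k (M : Matrix ι ι R[X]), (X : R[X]) ^ k • M = scalar ι (X : R[X]) ^ k * M := by
    intro k M; rw [← map_pow, smul_eq_diagonal_mul, scalar_apply]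
  simp only [hpow, hscalar, mul_one]
  exact hcomm.mul_geom_sum₂ n

theorem charpoly_eq_sub_cramer_of_eq_add_col {A B : Matrix ι ι R} {j : ι} {w : ι → R}
    (hA : ∀ u v, A u v = B u v + if v = j then w u else 0) :
    A.charpoly = B.charpoly - cramer (charmatrix B) (fun u => C (w u)) j := by
  have hchar : charmatrix A
      = (charmatrix B).updateCol j ((fun u => charmatrix B u j) + -fun u => C (w u)) := by
    refine Matrix.ext fun u v => ?_
    by_cases hv : v = j
    · subst hv
      simp only [charmatrix_apply, hA, if_pos, map_add, updateCol_self, Pi.add_apply,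
        Pi.neg_apply]
      ring
    · simp [charmatrix_apply, hA, hv]
  rw [charpoly, hchar, det_updateCol_add, updateCol_eq_self, ← cramer_apply, map_neg,
    Pi.neg_apply, ← sub_eq_add_neg]
  rfl

variable [IsReduced R]

theorem charpoly_eq_X_pow_of_isNilpotent {B : Matrix ι ι R} (hB : IsNilpotent B) :
    B.charpoly = X ^ Fintype.card ι := by
  have h := isNilpotent_charpoly_sub_pow_of_isNilpotent hB
  exact sub_eq_zero.mp <| Polynomial.ext fun i => by
    simpa using (Polynomial.isNilpotent_iff.mp h i).eq_zero

theorem pow_card_eq_zero_of_isNilpotent {B : Matrix ι ι R} (hB : IsNilpotent B) :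
    B ^ Fintype.card ι = 0 := by
  simpa [charpoly_eq_X_pow_of_isNilpotent hB] using aeval_self_charpoly B

theorem adjugate_charmatrix_of_isNilpotent {B : Matrix ι ι R} (hB : IsNilpotent B) :
    (charmatrix B).adjugate = ∑ i ∈ range (Fintype.card ι),
      (X : R[X]) ^ i • (B ^ (Fintype.card ι - 1 - i)).map C := by
  set n := Fintype.card ι
  have hS := charmatrix_mul_geom_sum B n
  rw [pow_card_eq_zero_of_isNilpotent hB, Matrix.map_zero _ (map_zero C), sub_zero] at hS
  have key : (X : R[X]) ^ n • (charmatrix B).adjugate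
      = (X : R[X]) ^ n • ∑ i ∈ range n, (X : R[X]) ^ i • (B ^ (n - 1 - i)).map C := by
    calc (X : R[X]) ^ n • (charmatrix B).adjugate
        = (charmatrix B).adjugate * (charmatrix B * _) := by rw [hS, Matrix.mul_smul, mul_one]
      _ = _ := by rw [← mul_assoc, adjugate_mul, ← charpoly,
          charpoly_eq_X_pow_of_isNilpotent hB, smul_mul, one_mul]
  refine Matrix.ext fun u v => ?_
  exact (isRegular_X_pow n).left (congrFun (congrFun key u) v)

theorem cramer_charmatrix_of_isNilpotent {B : Matrix ι ι R} (hB : IsNilpotent B) (w : ι → R)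
    (j : ι) : cramer (charmatrix B) (fun u => C (w u)) j
      = ∑ i ∈ range (Fintype.card ι), C ((B ^ (Fintype.card ι - 1 - i) *ᵥ w) j) * X ^ i := by
  simp only [cramer_eq_adjugate_mulVec, adjugate_charmatrix_of_isNilpotent hB, mulVec, dotProduct,
    sum_apply, smul_apply, map_apply, smul_eq_mul, sum_mul, map_sum, map_mul]
  rw [sum_comm]
  refine sum_congr rfl fun i _ => sum_congr rfl fun v _ => by ring

theorem coeff_charpoly_of_eq_add_col {A B : Matrix ι ι R} (hB : IsNilpotent B) {j : ι}
    {w : ι → R} (hA : ∀ u v, A u v = B u v + if v = j then w u else 0) {i : ℕ} (hi1 : 1 ≤ i)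
    (hi2 : i ≤ Fintype.card ι) :
    A.charpoly.coeff (Fintype.card ι - i) = -(B ^ (i - 1) *ᵥ w) j := by
  rw [charpoly_eq_sub_cramer_of_eq_add_col hA, charpoly_eq_X_pow_of_isNilpotent hB,
    cramer_charmatrix_of_isNilpotent hB, coeff_sub, coeff_X_pow, if_neg (by omega),
    finsetSum_coeff]
  simp only [coeff_C_mul_X_pow, sum_ite_eq, mem_range]
  rw [if_pos (by omega), zero_sub, show Fintype.card ι - 1 - (Fintype.card ι - i) = i - 1 by omega]

end Matrix

theorem List.append_singleton_eq_iff {α : Type*} {u v : List α} {a : α} :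
    u ++ [a] = v ↔ ∃ h : v ≠ [], u = v.dropLast ∧ a = v.getLast h := by
  constructor
  · rintro rfl
    exact ⟨by simp, by simp, by simp⟩
  · rintro ⟨h, rfl, rfl⟩
    exact List.dropLast_append_getLast h

section Tree

variable {m : ℕ} {T : Finset (List (Fin m))}

theorem dropLast_mem_nonTerm (hdc : DownClosed T) {σ : List (Fin m)} (hσ : σ ∈ T)
    (hne : σ ≠ []) : σ.dropLast ∈ NonTerm T := by
  refine mem_filter.mpr ⟨hdc σ hσ _ σ.dropLast_prefix, fun hterm => ?_⟩
  have := congrArg List.length (hterm.2 σ hσ σ.dropLast_prefix)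
  simp only [List.length_dropLast] at this
  exact hne (List.length_eq_zero_iff.mp (by omega))

variable (T) in
noncomputable def childMatrix : Matrix (NonTerm T) (NonTerm T) ℤ :=
  Matrix.of fun u v => ((univ.filter fun a : Fin m =>
    (u : List (Fin m)) ++ [a] = (v : List (Fin m))).card : ℤ)

variable (T) in
noncomputable def terminalChildCount (u : NonTerm T) : ℤ :=
  ((univ.filter fun a : Fin m => IsTerminal T ((u : List (Fin m)) ++ [a])).card : ℤ)

theorem childMatrix_apply (u v : NonTerm T) :
    childMatrix T u v = if (v : List (Fin m)) ≠ [] ∧ (u : List (Fin m)) = v.1.dropLast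
      then 1 else 0 := by
  simp only [childMatrix, of_apply, List.append_singleton_eq_iff]
  split_ifs with h
  · obtain ⟨hne, hu⟩ := h
    rw [Finset.card_eq_one.mpr ⟨v.1.getLast hne, by ext; simp [hne, hu]⟩, Nat.cast_one]
  · simp only [Nat.cast_eq_zero, card_eq_zero, filter_eq_empty_iff]
    rintro a - ⟨hne, hu, -⟩
    exact h ⟨hne, hu⟩

theorem childMatrix_pow_apply (hdc : DownClosed T) (k : ℕ) (u v : NonTerm T) :
    (childMatrix T ^ k) u v = if (u : List (Fin m)) <+: v ∧
      (v : List (Fin m)).length = (u : List (Fin m)).length + k then 1 else 0 := by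
  induction k generalizing v with
  | zero =>
    rw [pow_zero, one_apply]
    refine if_congr ⟨fun h => h ▸ ⟨List.prefix_refl _, rfl⟩, fun ⟨h, hl⟩ => ?_⟩ rfl rfl
    exact Subtype.ext (h.eq_of_length hl.symm)
  | succ k ih =>
    rw [pow_succ, mul_apply]
    by_cases hv : (v : List (Fin m)) = []
    · rw [if_neg (by simp [hv])]
      exact sum_eq_zero fun x _ => by rw [childMatrix_apply, if_neg (by simp [hv]), mul_zero]
    set p : NonTerm T := ⟨v.1.dropLast, dropLast_mem_nonTerm hdc (mem_filter.mp v.2).1 hv⟩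
    have hchild : ∀ x, childMatrix T x v = if x = p then 1 else 0 := fun x => by
      rw [childMatrix_apply]
      exact if_congr (by simp [hv, p, Subtype.ext_iff]) rfl rfl
    simp only [hchild, mul_ite, mul_one, mul_zero, sum_ite_eq', mem_univ, if_true, ih]
    refine if_congr ⟨fun ⟨hp, hl⟩ => ⟨hp.trans v.1.dropLast_prefix, ?_⟩, fun ⟨hp, hl⟩ => ⟨?_, ?_⟩⟩
      rfl rfl
    · have := List.length_pos_iff.mpr hv
      simp only [p, List.length_dropLast] at hl
      omega
    · exact List.prefix_of_prefix_length_le hp v.1.dropLast_prefix (by simp only [List.length_dropLast, p]; omega)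
    · simp only [p, List.length_dropLast]; omega

theorem isNilpotent_childMatrix (hdc : DownClosed T) : IsNilpotent (childMatrix T) := by
  refine ⟨T.sup List.length + 1, Matrix.ext fun u v => ?_⟩
  rw [childMatrix_pow_apply hdc, if_neg, Matrix.zero_apply]
  rintro ⟨-, hl⟩
  have := le_sup (f := List.length) (mem_filter.mp v.2).1
  omega

theorem card_terminal_eq_sum_terminalChildCount (hdc : DownClosed T) (k : ℕ) :
    (T.filter fun σ => IsTerminal T σ ∧ σ.length = k + 1).card
      = ∑ v ∈ (NonTerm T).filter (·.length = k),
          (univ.filter fun a : Fin m => IsTerminal T (v ++ [a])).card := by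
  refine (card_eq_sum_card_fiberwise (f := List.dropLast) fun σ hσ => ?_).trans
    (sum_congr rfl fun v hv => ?_)
  · obtain ⟨hσT, -, hlen⟩ := mem_filter.mp hσ
    have hne : σ ≠ [] := by rintro rfl; simp at hlen
    exact mem_filter.mpr ⟨dropLast_mem_nonTerm hdc hσT hne, by simp [hlen]⟩
  have hinj : Function.Injective fun a : Fin m => v ++ [a] := fun a b h => by simpa using h
  rw [← card_image_of_injective _ hinj]
  congr 1
  ext σ
  simp only [mem_filter, mem_image, mem_univ, true_and]
  constructor
  · rintro ⟨⟨-, hterm, hlen⟩, rfl⟩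
    have hne : σ ≠ [] := by rintro rfl; simp at hlen
    exact ⟨σ.getLast hne, by rwa [List.dropLast_append_getLast], List.dropLast_append_getLast hne⟩
  · rintro ⟨a, hterm, rfl⟩
    exact ⟨⟨hterm.1, hterm, by simp [(mem_filter.mp hv).2]⟩, List.dropLast_concat⟩

theorem childMatrix_pow_mulVec_terminalChildCount (hdc : DownClosed T)
    (hroot : [] ∈ NonTerm T) (k : ℕ) :
    (childMatrix T ^ k *ᵥ terminalChildCount T) ⟨[], hroot⟩
      = (T.filter fun σ => IsTerminal T σ ∧ σ.length = k + 1).card := by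
  rw [card_terminal_eq_sum_terminalChildCount hdc, Nat.cast_sum, sum_filter,
    ← sum_coe_sort (NonTerm T)]
  simp only [mulVec, dotProduct, childMatrix_pow_apply hdc, List.nil_prefix, true_and,
    List.length_nil, zero_add, ite_mul, one_mul, zero_mul, terminalChildCount]

end Tree

theorem charpoly_coeff_eq_neg_terminal_count_general {m : ℕ}
    (T : Finset (List (Fin m))) (hdc : DownClosed T)
    (hroot : ([] : List (Fin m)) ∈ T) (hnt : ¬ IsTerminal T ([] : List (Fin m)))
    (A : Matrix (NonTerm T) (NonTerm T) ℤ)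
    (hA : ∀ u v : NonTerm T, A u v =
      ((Finset.univ.filter (fun a : Fin m =>
          (u : List (Fin m)) ++ [a] = (v : List (Fin m)))).card : ℤ)
      + (if (v : List (Fin m)) = [] then
          ((Finset.univ.filter (fun a : Fin m =>
            IsTerminal T ((u : List (Fin m)) ++ [a]))).card : ℤ) else 0))
    (i : ℕ) (hi1 : 1 ≤ i) (hi2 : i ≤ Fintype.card (NonTerm T)) :
    (Matrix.charpoly A).coeff (Fintype.card (NonTerm T) - i)
      = -((T.filter (fun σ => IsTerminal T σ ∧ σ.length = i)).card : ℤ) := by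
  have hroot' : [] ∈ NonTerm T := mem_filter.mpr ⟨hroot, hnt⟩
  have hA' : ∀ u v, A u v = childMatrix T u v
      + if v = ⟨[], hroot'⟩ then terminalChildCount T u else 0 := fun u v => by
    rw [hA]
    exact congrArg₂ (· + ·) rfl (if_congr (by simp [Subtype.ext_iff]) rfl rfl)
  rw [coeff_charpoly_of_eq_add_col (isNilpotent_childMatrix hdc) hA' hi1 hi2,
    childMatrix_pow_mulVec_terminalChildCount hdc, Nat.sub_add_cancel hi1]

/-- Let T be a finite tree with n non-terminal nodes and let A be the
adjacency matrix of the associated pointed directed graph G: vertices are the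
non-terminal nodes; for each child relation an edge labelled accordingly; and for each
terminal child of σ_i an edge from v_i back to the root v_1 = [].  If
p_A(z) = z^n + c_1 z^{n-1} + ⋯ + c_n is the characteristic polynomial of A, then for
each i = 1,...,n, −c_i equals the number of terminal nodes of T of depth i. -/
theorem charpoly_coeff_eq_neg_terminal_count {m : ℕ} (hm : 1 ≤ m)
    (T : Finset (List (Fin m))) (hdc : DownClosed T)
    (hroot : ([] : List (Fin m)) ∈ T) (hnt : ¬ IsTerminal T ([] : List (Fin m)))
    (A : Matrix (NonTerm T) (NonTerm T) ℤ)
    (hA : ∀ u v : NonTerm T, A u v =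
      ((Finset.univ.filter (fun a : Fin m =>
          (u : List (Fin m)) ++ [a] = (v : List (Fin m)))).card : ℤ)
      + (if (v : List (Fin m)) = [] then
          ((Finset.univ.filter (fun a : Fin m =>
            IsTerminal T ((u : List (Fin m)) ++ [a]))).card : ℤ) else 0))
    (i : ℕ) (hi1 : 1 ≤ i) (hi2 : i ≤ Fintype.card (NonTerm T)) :
    (Matrix.charpoly A).coeff (Fintype.card (NonTerm T) - i)
      = -((T.filter (fun σ => IsTerminal T σ ∧ σ.length = i)).card : ℤ) :=
  charpoly_coeff_eq_neg_terminal_count_general T hdc hroot hnt A hA i hi1 hi2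
end

section
/- Let T be a finite tree with n non-terminal nodes and terminal-node depth counts d_1,...,d_n (d_i the number of terminal nodes of depth i). Let A be the adjacency matrix of the associated directed graph, and let ρ be the Perron (largest positive real) eigenvalue of A. Then α = log₂(ρ) satisfies ∑_{i=1}^n d_i · 2^{−α i} = 1; i.e., log₂(ρ) equals the channel capacity of the length function ℓ_T induced by T. -/
open scoped Classical

/-!
For a non-terminal node `u` put `h(u) = ∑ ρ^{-(|τ| - |u|)}`, the sum over the terminal nodes `τ`
extending `u`. Splitting by the next letter gives `ρ h(u) = ∑_a h(ua)`, where a terminal child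
contributes `1`. If `v` is an eigenvector of `A` for `ρ`, the eigen-equation reads
`ρ v(u) = ∑_{ua non-terminal} v(ua) + #{terminal children of u} · v([])`, so
`w(u) = v(u) - h(u) v([])` satisfies `ρ w(u) = ∑_{ua non-terminal} w(ua)`; since `ρ ≠ 0`, induction
from the leaves gives `w = 0`. As `v ≠ 0`, this forces `v([]) ≠ 0` and hence `h([]) = 1`, and
grouping the terminal nodes by depth turns `h([]) = 1` into `∑ d_i ρ^{-i} = 1`.
-/

open Finset Matrix

theorem Matrix.exists_mulVec_eq_smul_of_isRoot_charpoly {K n : Type*} [Field K] [Fintype n]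
    [DecidableEq n] {A : Matrix n n K} {μ : K} (h : A.charpoly.IsRoot μ) :
    ∃ v ≠ 0, A *ᵥ v = μ • v := by
  rw [Polynomial.IsRoot.def, eval_charpoly, ← exists_mulVec_eq_zero_iff] at h
  obtain ⟨v, hv, hμv⟩ := h
  refine ⟨v, hv, ?_⟩
  rw [sub_mulVec, sub_eq_zero, scalar_apply, ← smul_one_eq_diagonal, smul_mulVec, one_mulVec]
    at hμv
  exact hμv.symm

theorem Fintype.sum_card_fiber_mul_eq_sum_extend {α β R : Type*} [Fintype α] [DecidableEq β]
    [Semiring R] {s : Finset β} (g : α → β) (v : s → R) :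
    ∑ w : s, (#{a | g a = w} : R) * v w = ∑ a, Function.extend Subtype.val v 0 (g a) := by
  simp_rw [natCast_card_filter, Finset.sum_mul, ite_mul, one_mul, zero_mul]
  rw [Finset.sum_comm]
  refine Finset.sum_congr rfl fun a _ => ?_
  by_cases ha : g a ∈ s
  · obtain ⟨w, hw⟩ : ∃ w : s, g a = w := ⟨⟨g a, ha⟩, rfl⟩
    simp only [hw, Subtype.val_injective.extend_apply, Subtype.coe_inj, Finset.sum_ite_eq,
      mem_univ, if_true]
  · rw [Function.extend_apply' _ _ _ fun ⟨w, hw⟩ => ha (hw ▸ w.2)]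
    exact Finset.sum_eq_zero fun w _ => if_neg fun hw : g a = w => ha (hw ▸ w.2)

theorem Real.rpow_neg_logb_mul_natCast {b x : ℝ} (hb : 0 < b) (hb1 : b ≠ 1) (hx : 0 < x)
    (i : ℕ) : b ^ (-(Real.logb b x * i)) = x⁻¹ ^ i := by
  rw [neg_mul_eq_mul_neg, Real.rpow_mul hb.le, Real.rpow_logb hb hb1 hx, Real.rpow_neg hx.le,
    Real.rpow_natCast, inv_pow]

section TerminalWeight

variable {m : ℕ} {T : Finset (List (Fin m))}

noncomputable def terminalExtensions (T : Finset (List (Fin m))) (u : List (Fin m)) :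
    Finset (List (Fin m)) :=
  T.filter fun τ => IsTerminal T τ ∧ u <+: τ

noncomputable def terminalWeight {R : Type*} [CommSemiring R] (T : Finset (List (Fin m))) (x : R)
    (u : List (Fin m)) : R :=
  ∑ τ ∈ terminalExtensions T u, x ^ (τ.length - u.length)

theorem terminalExtensions_of_isTerminal {v : List (Fin m)} (hv : IsTerminal T v) :
    terminalExtensions T v = {v} := by
  ext τ
  simp only [terminalExtensions, mem_filter, mem_singleton]
  constructor
  · rintro ⟨hτ, -, hvτ⟩
    exact hv.2 τ hτ hvτ
  · rintro rfl
    exact ⟨hv.1, hv, List.prefix_refl _⟩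

theorem terminalExtensions_of_notMem (hdc : DownClosed T) {v : List (Fin m)} (hv : v ∉ T) :
    terminalExtensions T v = ∅ :=
  filter_false_of_mem fun τ hτ ⟨_, hvτ⟩ => hv (hdc τ hτ v hvτ)

theorem terminalExtensions_eq_biUnion {u : List (Fin m)} (hu : ¬ IsTerminal T u) :
    terminalExtensions T u = univ.biUnion fun a => terminalExtensions T (u ++ [a]) := by
  ext τ
  simp only [terminalExtensions, mem_filter, mem_biUnion, mem_univ, true_and]
  constructor
  · rintro ⟨hτ, hterm, r, rfl⟩
    obtain _ | ⟨a, r⟩ := r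
    · exact absurd (by simpa using hterm) hu
    · exact ⟨a, hτ, hterm, r, by simp⟩
  · rintro ⟨a, hτ, hterm, hpre⟩
    exact ⟨hτ, hterm, (List.prefix_append u [a]).trans hpre⟩

theorem pairwiseDisjoint_terminalExtensions_append (u : List (Fin m)) :
    ((univ : Finset (Fin m)) : Set (Fin m)).PairwiseDisjoint
      fun a => terminalExtensions T (u ++ [a]) := by
  intro a _ b _ hab
  refine disjoint_left.mpr fun τ hτa hτb => hab ?_
  have hpre := List.prefix_of_prefix_length_le (mem_filter.mp hτa).2.2 (mem_filter.mp hτb).2.2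
    (by simp)
  simpa using hpre.eq_of_length (by simp)

variable {R : Type*} [CommSemiring R]

theorem terminalWeight_of_isTerminal (x : R) {v : List (Fin m)} (hv : IsTerminal T v) :
    terminalWeight T x v = 1 := by
  simp [terminalWeight, terminalExtensions_of_isTerminal hv]

theorem terminalWeight_of_notMem (hdc : DownClosed T) (x : R) {v : List (Fin m)} (hv : v ∉ T) :
    terminalWeight T x v = 0 := by
  simp [terminalWeight, terminalExtensions_of_notMem hdc hv]

theorem terminalWeight_eq_mul_sum_append (x : R) {u : List (Fin m)} (hu : ¬ IsTerminal T u) :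
    terminalWeight T x u = x * ∑ a, terminalWeight T x (u ++ [a]) := by
  rw [terminalWeight, terminalExtensions_eq_biUnion hu,
    sum_biUnion (pairwiseDisjoint_terminalExtensions_append u), mul_sum]
  refine sum_congr rfl fun a _ => ?_
  rw [terminalWeight, mul_sum]
  refine sum_congr rfl fun τ hτ => ?_
  have hlen : (u ++ [a]).length ≤ τ.length := (mem_filter.mp hτ).2.2.length_le
  rw [← pow_succ']
  congr 1
  simp only [List.length_append, List.length_singleton] at hlen ⊢
  omega

theorem sum_terminalWeight_append (hdc : DownClosed T) (x : R) (u : List (Fin m)) :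
    ∑ a, terminalWeight T x (u ++ [a]) =
      ∑ a with u ++ [a] ∈ NonTerm T, terminalWeight T x (u ++ [a]) +
        #{a | IsTerminal T (u ++ [a])} := by
  rw [← sum_filter_add_sum_filter_not univ fun a => u ++ [a] ∈ NonTerm T, natCast_card_filter,
    sum_filter (fun a => u ++ [a] ∉ NonTerm T)]
  congr 1
  refine sum_congr rfl fun a _ => ?_
  by_cases hterm : IsTerminal T (u ++ [a])
  · simp [NonTerm, hterm, terminalWeight_of_isTerminal]
  by_cases haT : u ++ [a] ∈ T
  · simp [NonTerm, hterm, haT]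
  · simp [NonTerm, hterm, haT, terminalWeight_of_notMem hdc]

end TerminalWeight

section Depth

variable {m : ℕ} {T : Finset (List (Fin m))}

theorem length_le_card_nonTerm (hdc : DownClosed T) {τ : List (Fin m)} (hτ : IsTerminal T τ) :
    τ.length ≤ (NonTerm T).card := by
  have hmaps : Set.MapsTo (fun i => τ.take i) (range τ.length) (NonTerm T) := by
    intro i hi
    rw [coe_range, Set.mem_Iio] at hi
    refine mem_filter.mpr ⟨hdc τ hτ.1 _ (List.take_prefix i τ), fun hterm => ?_⟩
    have := congrArg List.length (hterm.2 τ hτ.1 (List.take_prefix i τ))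
    rw [List.length_take] at this
    omega
  have hinj : Set.InjOn (fun i => τ.take i) (range τ.length) := by
    intro i hi j hj hij
    rw [coe_range, Set.mem_Iio] at hi hj
    simpa [hi.le, hj.le] using congrArg List.length hij
  simpa using card_le_card_of_injOn _ hmaps hinj

theorem sum_card_terminal_length_mul_pow {R : Type*} [CommSemiring R] (hdc : DownClosed T)
    (hnt : ¬ IsTerminal T []) (x : R) :
    ∑ i ∈ Icc 1 (NonTerm T).card,
        (#(T.filter fun σ => IsTerminal T σ ∧ σ.length = i) : R) * x ^ i =
      terminalWeight T x [] := by
  have hmaps : ∀ τ ∈ terminalExtensions T [], τ.length ∈ Icc 1 (NonTerm T).card := by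
    intro τ hτ
    have hterm := (mem_filter.mp hτ).2.1
    refine mem_Icc.mpr ⟨List.length_pos_iff.mpr ?_, length_le_card_nonTerm hdc hterm⟩
    rintro rfl
    exact hnt hterm
  rw [terminalWeight, ← sum_fiberwise_of_maps_to hmaps]
  refine sum_congr rfl fun i _ => ?_
  have hfiber : (terminalExtensions T []).filter (fun τ => τ.length = i) =
      T.filter fun σ => IsTerminal T σ ∧ σ.length = i := by
    ext τ
    simp [terminalExtensions, and_assoc]
  have hlength : ∀ τ ∈ T.filter (fun σ => IsTerminal T σ ∧ σ.length = i),
      x ^ (τ.length - ([] : List (Fin m)).length) = x ^ i := fun τ hτ => by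
    rw [List.length_nil, Nat.sub_zero, (mem_filter.mp hτ).2.2]
  rw [hfiber, sum_congr rfl hlength, sum_const, nsmul_eq_mul]

theorem eq_zero_of_mul_eq_sum_append {R : Type*} [Semiring R] [NoZeroDivisors R] {ρ : R}
    (hρ : ρ ≠ 0) {f : List (Fin m) → R}
    (hf : ∀ u ∈ NonTerm T, ρ * f u = ∑ a with u ++ [a] ∈ NonTerm T, f (u ++ [a]))
    {u : List (Fin m)} (hu : u ∈ NonTerm T) : f u = 0 := by
  suffices ∀ k, ∀ u ∈ NonTerm T, T.sup List.length < u.length + k → f u = 0 from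
    this (T.sup List.length + 1) u hu (by omega)
  intro k
  induction k with
  | zero =>
    intro u hu hlt
    exact absurd (le_sup (f := List.length) (mem_filter.mp hu).1) (not_le.mpr hlt)
  | succ k ih =>
    intro u hu hlt
    have hchildren : ρ * f u = 0 := by
      rw [hf u hu]
      refine sum_eq_zero fun a ha => ih _ (mem_filter.mp ha).2 ?_
      simp only [List.length_append, List.length_singleton]
      omega
    exact (mul_eq_zero.mp hchildren).resolve_left hρ

end Depth

section AdjMatrix

variable {m : ℕ} {T : Finset (List (Fin m))}

/-- Terminal nodes are identified with the root: each terminal child of `u` gives an edge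
`u → []`. -/
noncomputable def treeAdjMatrix (R : Type*) [Semiring R] (T : Finset (List (Fin m))) :
    Matrix (NonTerm T) (NonTerm T) R :=
  Matrix.of fun u v =>
    (#{a | (u : List (Fin m)) ++ [a] = (v : List (Fin m))} : R) +
      if (v : List (Fin m)) = [] then (#{a | IsTerminal T ((u : List (Fin m)) ++ [a])} : R) else 0

theorem treeAdjMatrix_mulVec_apply {R : Type*} [Semiring R] (hroot : [] ∈ NonTerm T)
    (v : NonTerm T → R) (u : NonTerm T) :
    (treeAdjMatrix R T *ᵥ v) u =
      ∑ a, Function.extend Subtype.val v 0 ((u : List (Fin m)) ++ [a]) +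
        #{a | IsTerminal T ((u : List (Fin m)) ++ [a])} * v ⟨[], hroot⟩ := by
  simp only [mulVec, dotProduct, treeAdjMatrix, of_apply, add_mul, sum_add_distrib,
    Fintype.sum_card_fiber_mul_eq_sum_extend]
  congr 1
  rw [sum_eq_single ⟨[], hroot⟩ fun w _ hw => by simp [Subtype.ext_iff.not.mp hw], if_pos rfl]
  simp

end AdjMatrix

theorem terminalWeight_nil_eq_one_of_mulVec_eq_smul {m : ℕ} {T : Finset (List (Fin m))}
    {K : Type*} [Field K] (hdc : DownClosed T) (hroot : [] ∈ NonTerm T) {ρ : K} (hρ : ρ ≠ 0)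
    {v : NonTerm T → K} (hv : v ≠ 0) (hAv : treeAdjMatrix K T *ᵥ v = ρ • v) :
    terminalWeight T ρ⁻¹ [] = 1 := by
  set y := Function.extend Subtype.val v 0
  have hy : ∀ w : NonTerm T, y w = v w := Subtype.val_injective.extend_apply v 0
  have hy_zero : ∀ l ∉ NonTerm T, y l = 0 := fun l hl =>
    Function.extend_apply' _ _ _ fun ⟨w, hw⟩ => hl (hw ▸ w.2)
  have hy_children : ∀ u : List (Fin m),
      ∑ a, y (u ++ [a]) = ∑ a with u ++ [a] ∈ NonTerm T, y (u ++ [a]) := fun u =>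
    (sum_filter_of_ne fun a _ hya => by_contra fun ha => hya (hy_zero _ ha)).symm
  have hy_eigen : ∀ u ∈ NonTerm T, ρ * y u =
      ∑ a with u ++ [a] ∈ NonTerm T, y (u ++ [a]) + #{a | IsTerminal T (u ++ [a])} * y [] := by
    intro u hu
    have := congrFun hAv ⟨u, hu⟩
    rwa [treeAdjMatrix_mulVec_apply hroot, Pi.smul_apply, smul_eq_mul, ← hy, ← hy,
      hy_children, eq_comm] at this
  have hweight : ∀ u ∈ NonTerm T, ρ * terminalWeight T ρ⁻¹ u =
      ∑ a with u ++ [a] ∈ NonTerm T, terminalWeight T ρ⁻¹ (u ++ [a]) +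
        #{a | IsTerminal T (u ++ [a])} := by
    intro u hu
    rw [terminalWeight_eq_mul_sum_append _ (mem_filter.mp hu).2, ← mul_assoc,
      mul_inv_cancel₀ hρ, one_mul, sum_terminalWeight_append hdc]
  have hdiff_zero : ∀ u ∈ NonTerm T, y u - terminalWeight T ρ⁻¹ u * y [] = 0 := by
    refine fun _ => eq_zero_of_mul_eq_sum_append hρ
      (f := fun u => y u - terminalWeight T ρ⁻¹ u * y []) fun u hu => ?_
    rw [mul_sub, hy_eigen u hu, ← mul_assoc, hweight u hu, sum_sub_distrib, ← sum_mul]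
    ring
  have hy_root : y [] ≠ 0 := fun h => hv <| funext fun w => by
    simpa [h, hy] using hdiff_zero w w.2
  have := hdiff_zero [] hroot
  rwa [sub_eq_zero, eq_comm, mul_eq_right₀ hy_root] at this

theorem log_perron_eq_channel_capacity_general {m : ℕ}
    (T : Finset (List (Fin m))) (hdc : DownClosed T)
    (hroot : ([] : List (Fin m)) ∈ T) (hnt : ¬ IsTerminal T ([] : List (Fin m)))
    (A : Matrix (NonTerm T) (NonTerm T) ℝ)
    (hA : ∀ u v : NonTerm T, A u v =
      ((Finset.univ.filter (fun a : Fin m =>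
          (u : List (Fin m)) ++ [a] = (v : List (Fin m)))).card : ℝ)
      + (if (v : List (Fin m)) = [] then
          ((Finset.univ.filter (fun a : Fin m =>
            IsTerminal T ((u : List (Fin m)) ++ [a]))).card : ℝ) else 0))
    (ρ : ℝ) (hρpos : 0 < ρ)
    (hρroot : (Matrix.charpoly A).IsRoot ρ) :
    ∑ i ∈ Finset.Icc 1 (Fintype.card (NonTerm T)),
        ((T.filter (fun σ => IsTerminal T σ ∧ σ.length = i)).card : ℝ)
          * (2 : ℝ) ^ (-(Real.logb 2 ρ * (i : ℝ))) = 1 := by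
  obtain rfl : A = treeAdjMatrix ℝ T := Matrix.ext hA
  obtain ⟨v, hv, hAv⟩ := Matrix.exists_mulVec_eq_smul_of_isRoot_charpoly hρroot
  simp_rw [Real.rpow_neg_logb_mul_natCast two_pos (by norm_num) hρpos, Fintype.card_coe]
  rw [sum_card_terminal_length_mul_pow hdc hnt]
  exact terminalWeight_nil_eq_one_of_mulVec_eq_smul hdc (mem_filter.mpr ⟨hroot, hnt⟩)
    hρpos.ne' hv hAv

/-- Let T be a finite tree with n non-terminal nodes and terminal-node
depth counts d_1,...,d_n.  Let A be the adjacency matrix (over ℝ) of the associated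
pointed directed graph, and let ρ be the Perron eigenvalue of A (its largest real
root of the characteristic polynomial, which is positive).  Then α = log₂ ρ satisfies
∑_{i=1}^n d_i · 2^{−α·i} = 1, i.e. log₂ ρ is the channel capacity of ℓ_T. -/
theorem log_perron_eq_channel_capacity {m : ℕ} (hm : 1 ≤ m)
    (T : Finset (List (Fin m))) (hdc : DownClosed T)
    (hroot : ([] : List (Fin m)) ∈ T) (hnt : ¬ IsTerminal T ([] : List (Fin m)))
    (A : Matrix (NonTerm T) (NonTerm T) ℝ)
    (hA : ∀ u v : NonTerm T, A u v =
      ((Finset.univ.filter (fun a : Fin m =>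
          (u : List (Fin m)) ++ [a] = (v : List (Fin m)))).card : ℝ)
      + (if (v : List (Fin m)) = [] then
          ((Finset.univ.filter (fun a : Fin m =>
            IsTerminal T ((u : List (Fin m)) ++ [a]))).card : ℝ) else 0))
    (ρ : ℝ) (hρpos : 0 < ρ)
    (hρroot : (Matrix.charpoly A).IsRoot ρ)
    (hρmax : ∀ t : ℝ, (Matrix.charpoly A).IsRoot t → t ≤ ρ) :
    ∑ i ∈ Finset.Icc 1 (Fintype.card (NonTerm T)),
        ((T.filter (fun σ => IsTerminal T σ ∧ σ.length = i)).card : ℝ)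
          * (2 : ℝ) ^ (-(Real.logb 2 ρ * (i : ℝ))) = 1 :=
  log_perron_eq_channel_capacity_general T hdc hroot hnt A hA ρ hρpos hρroot
end
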